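/- For any positive integer j and any graph G, w_j(G) ≤ γ_j(G) ≤ z_j(G), where z_j and w_j are the degree-sequence indices defined relative to minimum j-dominating sets. -/

import Mathlib

open Finset

namespace DSI

variable {V : Type*} (G : SimpleGraph V) [Fintype V] [DecidableEq V] [DecidableRel G.Adj]

/-- The degree sequence of `G`, sorted in non-decreasing order. -/
def dseq : List ℕ := (Finset.univ.val.map (fun v => G.degree v)).sort (· ≤ ·)

/-- The sum of the `k` smallest degrees, `Σ_{i=1}^k d_i`. -/
def sumSmallest (k : ℕ) : ℕ := ((dseq G).take k).sum

/-- The sum of the `k` largest degrees, `Σ_{i=1}^k d_{n-i+1}`. -/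
def sumLargest (k : ℕ) : ℕ := ((dseq G).reverse.take k).sum

/-- The number of edges `m(G)`. -/
def esize : ℕ := G.edgeFinset.card

/-- `m[S]`: the number of edges of the subgraph induced by `S`. -/
def mOn (S : Finset V) : ℕ := (S.sym2.filter (fun e => e ∈ G.edgeSet)).card

/-- A set `I` is `j`-independent if every vertex of `I` has fewer than `j` neighbours in `I`,
i.e. the induced subgraph has maximum degree `< j`. -/
def JIndep (j : ℕ) (I : Finset V) : Prop := ∀ v ∈ I, (I.filter (G.Adj v)).card < j

/-- The `j`-independence number `α_j(G)`. -/
noncomputable def alphaJ (j : ℕ) : ℕ := sSup {k | ∃ I : Finset V, JIndep G j I ∧ I.card = k}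

/-- The family `F` of maximum `j`-independent sets. -/
noncomputable def maxJIndep (j : ℕ) : Set (Finset V) :=
  {S | JIndep G j S ∧ S.card = alphaJ G j}

/-- `max_{S ∈ F} (m[V−S] − m[S])`. -/
noncomputable def fU (j : ℕ) : ℤ :=
  sSup ((fun S : Finset V => (mOn G Sᶜ : ℤ) - (mOn G S : ℤ)) '' maxJIndep G j)

/-- `min_{S ∈ F} (m[V−S] − m[S])`. -/
noncomputable def fL (j : ℕ) : ℤ :=
  sInf ((fun S : Finset V => (mOn G Sᶜ : ℤ) - (mOn G S : ℤ)) '' maxJIndep G j)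

/-- The upper `j`-annihilation number `a_j(G)`. -/
noncomputable def aJ (j : ℕ) : ℕ :=
  sSup {k | k ≤ Fintype.card V ∧ (sumSmallest G k : ℤ) + fU G j ≤ (esize G : ℤ)}

/-- The lower `j`-annihilation number `c_j(G)`. -/
noncomputable def cJ (j : ℕ) : ℕ :=
  sInf {k | k ≤ Fintype.card V ∧ (esize G : ℤ) ≤ (sumLargest G k : ℤ) + fL G j}

/-- The annihilation number `a(G)`. -/
noncomputable def annihilation : ℕ :=
  sSup {k | k ≤ Fintype.card V ∧ sumSmallest G k ≤ esize G}

/-- An independent set. -/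
def IndepSet (I : Finset V) : Prop := ∀ v ∈ I, ∀ w ∈ I, ¬ G.Adj v w

/-- The independence number `α(G)`. -/
noncomputable def alpha : ℕ := sSup {k | ∃ I : Finset V, IndepSet G I ∧ I.card = k}

end DSI
/-- `D` is a `j`-dominating set: every vertex outside `D` has at least `j` neighbours
in `D`. -/
def DSI.JDom {V : Type*} (G : SimpleGraph V) [DecidableEq V] [DecidableRel G.Adj] (j : ℕ) (D : Finset V) : Prop :=
  ∀ v : V, v ∉ D → j ≤ (D.filter (fun w => G.Adj v w)).card

/-- The `j`-domination number `γ_j(G)`. -/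
noncomputable def DSI.gammaJ {V : Type*} (G : SimpleGraph V) [Fintype V]
    [DecidableEq V] [DecidableRel G.Adj] (j : ℕ) : ℕ :=
  sInf {k | ∃ D : Finset V, DSI.JDom G j D ∧ D.card = k}

/-- The family of minimum `j`-dominating sets. -/
noncomputable def DSI.minJDom {V : Type*} (G : SimpleGraph V) [Fintype V]
    [DecidableEq V] [DecidableRel G.Adj] (j : ℕ) : Set (Finset V) :=
  {D | DSI.JDom G j D ∧ D.card = DSI.gammaJ G j}

/-- `max_{S ∈ F} (m[V−S] − m[S])` over minimum `j`-dominating sets. -/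
noncomputable def DSI.fUdom {V : Type*} (G : SimpleGraph V) [Fintype V]
    [DecidableEq V] [DecidableRel G.Adj] (j : ℕ) : ℤ :=
  sSup ((fun S : Finset V => (DSI.mOn G Sᶜ : ℤ) - (DSI.mOn G S : ℤ)) '' DSI.minJDom G j)

/-- `min_{S ∈ F} (m[V−S] − m[S])` over minimum `j`-dominating sets. -/
noncomputable def DSI.fLdom {V : Type*} (G : SimpleGraph V) [Fintype V]
    [DecidableEq V] [DecidableRel G.Adj] (j : ℕ) : ℤ :=
  sInf ((fun S : Finset V => (DSI.mOn G Sᶜ : ℤ) - (DSI.mOn G S : ℤ)) '' DSI.minJDom G j)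

/-- `z_j(G) = max { k | Σ_{i=1}^k d_i + max_{S∈F}(m[V−S]−m[S]) ≤ m(G) }`. -/
noncomputable def DSI.zJ {V : Type*} (G : SimpleGraph V) [Fintype V]
    [DecidableEq V] [DecidableRel G.Adj] (j : ℕ) : ℕ :=
  sSup {k | k ≤ Fintype.card V ∧
    (DSI.sumSmallest G k : ℤ) + DSI.fUdom G j ≤ (DSI.esize G : ℤ)}

/-- `w_j(G) = min { k | Σ_{i=1}^k d_{n-i+1} + min_{S∈F}(m[V−S]−m[S]) ≥ m(G) }`. -/
noncomputable def DSI.wJ {V : Type*} (G : SimpleGraph V) [Fintype V]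
    [DecidableEq V] [DecidableRel G.Adj] (j : ℕ) : ℕ :=
  sInf {k | k ≤ Fintype.card V ∧
    (DSI.esize G : ℤ) ≤ (DSI.sumLargest G k : ℤ) + DSI.fLdom G j}

/-!
For every vertex set `S`, counting edges by how many ends they have in `S` gives
`Σ_{v ∈ S} d(v) + (m[V−S] − m[S]) = m(G)`. The sum of the `k` smallest (largest) degrees is at
most (at least) the degree sum over any `k`-set, so a minimum `j`-dominating set attaining the
maximum (minimum) in the definition of `z_j` (`w_j`) shows that `k = γ_j` satisfies the defining
inequality of `z_j` (`w_j`).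
-/

theorem List.sum_take_card_le_sum {α : Type*} [AddCommMonoid α] [LinearOrder α]
    [IsOrderedAddMonoid α] {l : List α} (hl : l.Pairwise (· ≤ ·)) {t : Multiset α}
    (ht : t ≤ l) : (l.take (Multiset.card t)).sum ≤ t.sum := by
  induction l generalizing t with
  | nil => simp [Multiset.le_zero.mp (by simpa using ht)]
  | cons a l ih =>
    rcases Multiset.empty_or_exists_mem t with rfl | ⟨y, hy⟩
    · simp
    rw [List.pairwise_cons] at hl
    obtain ⟨x, hxt, hax, hle⟩ : ∃ x ∈ t, a ≤ x ∧ t.erase x ≤ l := by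
      by_cases ha : a ∈ t
      · exact ⟨a, ha, le_rfl, by simpa using Multiset.erase_le_erase a ht⟩
      · have htl : t ≤ l := (Multiset.le_cons_of_notMem ha).mp (by simpa using ht)
        exact ⟨y, hy, hl.1 y (Multiset.mem_of_le htl hy), (Multiset.erase_le y t).trans htl⟩
    rw [← Multiset.cons_erase hxt, Multiset.card_cons, Multiset.sum_cons, List.take_succ_cons,
      List.sum_cons]
    exact add_le_add hax (ih hl.2 hle)

theorem List.sum_le_sum_take_card {α : Type*} [AddCommMonoid α] [LinearOrder α]
    [IsOrderedAddMonoid α] {l : List α} (hl : l.Pairwise (· ≥ ·)) {t : Multiset α}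
    (ht : t ≤ l) : t.sum ≤ (l.take (Multiset.card t)).sum :=
  List.sum_take_card_le_sum (α := αᵒᵈ) hl ht

namespace DSI

variable {V : Type*} (G : SimpleGraph V) [Fintype V] [DecidableRel G.Adj]

theorem degrees_le_dseq (S : Finset V) :
    S.val.map (fun v => G.degree v) ≤ (dseq G : Multiset ℕ) := by
  rw [dseq, Multiset.sort_eq]
  exact Multiset.map_le_map (val_le_iff.mpr (subset_univ S))

theorem sumSmallest_card_le_sum_degree (S : Finset V) :
    sumSmallest G #S ≤ ∑ v ∈ S, G.degree v := by
  have h := List.sum_take_card_le_sum (Multiset.pairwise_sort _ _) (degrees_le_dseq G S)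
  rwa [Multiset.card_map] at h

theorem sum_degree_le_sumLargest_card (S : Finset V) :
    ∑ v ∈ S, G.degree v ≤ sumLargest G #S := by
  have hle : S.val.map (fun v => G.degree v) ≤ ((dseq G).reverse : Multiset ℕ) := by
    rw [Multiset.coe_reverse]
    exact degrees_le_dseq G S
  have h := List.sum_le_sum_take_card
    (List.pairwise_reverse.mpr (Multiset.pairwise_sort _ (· ≤ ·))) hle
  rwa [Multiset.card_map] at h

variable [DecidableEq V]

theorem mOn_eq_card_filter_edgeFinset (S : Finset V) :
    mOn G S = #{e ∈ G.edgeFinset | e ∈ S.sym2} := by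
  rw [mOn]
  congr 1
  ext e
  simp [and_comm]

theorem sum_degree_eq_sum_card_filter_mem (S : Finset V) :
    ∑ v ∈ S, G.degree v = ∑ e ∈ G.edgeFinset, #{v ∈ S | v ∈ e} := by
  simp_rw [← G.card_incidenceFinset_eq_degree, G.incidenceFinset_eq_filter]
  exact sum_card_bipartiteAbove_eq_sum_card_bipartiteBelow (fun v e => v ∈ e)

theorem card_filter_mem_add_ite_compl (S : Finset V) {e : Sym2 V} (he : ¬ e.IsDiag) :
    #{v ∈ S | v ∈ e} + (if e ∈ Sᶜ.sym2 then 1 else 0) = 1 + if e ∈ S.sym2 then 1 else 0 := by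
  induction e using Sym2.ind with
  | h x y =>
    have hxy : x ≠ y := he
    by_cases hx : x ∈ S <;> by_cases hy : y ∈ S <;>
      simp [hx, hy, hxy, filter_or, filter_eq']

-- Double counting over edges: an edge with both ends in `S` contributes `2` to the degree sum
-- and is counted by `m[S]`, one with no end in `S` is counted by `m[V−S]`.
theorem sum_degree_add_mOn_compl (S : Finset V) :
    ∑ v ∈ S, G.degree v + mOn G Sᶜ = esize G + mOn G S := by
  rw [sum_degree_eq_sum_card_filter_mem, mOn_eq_card_filter_edgeFinset,
    mOn_eq_card_filter_edgeFinset, esize, card_filter, card_filter, card_eq_sum_ones,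
    ← sum_add_distrib, ← sum_add_distrib]
  exact sum_congr rfl fun e he =>
    card_filter_mem_add_ite_compl S (G.not_isDiag_of_mem_edgeSet (G.mem_edgeFinset.mp he))

def excess (S : Finset V) : ℤ := mOn G Sᶜ - mOn G S

theorem sum_degree_add_excess (S : Finset V) :
    (∑ v ∈ S, G.degree v : ℕ) + excess G S = esize G := by
  have h := sum_degree_add_mOn_compl G S
  rw [excess]
  omega

theorem minJDom_nonempty (j : ℕ) : (minJDom G j).Nonempty :=
  Nat.sInf_mem (s := {k | ∃ D : Finset V, JDom G j D ∧ #D = k})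
    ⟨_, univ, fun v hv => absurd (mem_univ v) hv, rfl⟩

theorem gammaJ_le_zJ (j : ℕ) : gammaJ G j ≤ zJ G j := by
  obtain ⟨S, ⟨-, hS⟩, hmax⟩ : ∃ S ∈ minJDom G j, excess G S = fUdom G j :=
    ((minJDom_nonempty G j).image (excess G)).csSup_mem (Set.toFinite _)
  refine le_csSup ⟨Fintype.card V, fun k hk => hk.1⟩ ⟨hS ▸ card_le_univ S, ?_⟩
  have hdeg := sumSmallest_card_le_sum_degree G S
  have hsum := sum_degree_add_excess G S
  rw [← hS, ← hmax]
  omega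

theorem wJ_le_gammaJ (j : ℕ) : wJ G j ≤ gammaJ G j := by
  obtain ⟨S, ⟨-, hS⟩, hmin⟩ : ∃ S ∈ minJDom G j, excess G S = fLdom G j :=
    ((minJDom_nonempty G j).image (excess G)).csInf_mem (Set.toFinite _)
  refine Nat.sInf_le ⟨hS ▸ card_le_univ S, ?_⟩
  have hdeg := sum_degree_le_sumLargest_card G S
  have hsum := sum_degree_add_excess G S
  rw [← hS, ← hmin]
  omega

end DSI

theorem wJ_le_gammaJ_le_zJ_general {V : Type*} (G : SimpleGraph V) [Fintype V]
    [DecidableEq V] [DecidableRel G.Adj] (j : ℕ) :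
    DSI.wJ G j ≤ DSI.gammaJ G j ∧ DSI.gammaJ G j ≤ DSI.zJ G j :=
  ⟨DSI.wJ_le_gammaJ G j, DSI.gammaJ_le_zJ G j⟩

theorem wJ_le_gammaJ_le_zJ {V : Type*} (G : SimpleGraph V) [Fintype V]
    [DecidableEq V] [DecidableRel G.Adj] (j : ℕ) (hj : 1 ≤ j) :
    DSI.wJ G j ≤ DSI.gammaJ G j ∧ DSI.gammaJ G j ≤ DSI.zJ G j :=
  wJ_le_gammaJ_le_zJ_general G j
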